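/- If the class of Ding projective right R-modules is closed under direct limits (filtered colimits), then R is right perfect, i.e., every flat right R-module is projective. -/

import Mathlib

/-! Preamble: basic notions of relative homological algebra over a
(possibly noncommutative) ring.  Right `R`-modules are modeled as
(left) modules over the opposite ring `Rᵐᵒᵖ`. -/

open CategoryTheory Opposite

noncomputable section

/-- The Ext group `Ext^n(A, B)` in the category of left `S`-modules,
computed as a derived functor (of `ℤ`-modules). -/
def extGroup (S : Type) [Ring S] (n : ℕ) (A B : ModuleCat.{0} S) : Type :=
  ((_root_.Ext ℤ (ModuleCat.{0} S) n).obj (op A)).obj B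

/-- Vanishing of the Ext group `Ext^n(A, B)`. -/
def extVanish (S : Type) [Ring S] (n : ℕ) (A B : ModuleCat.{0} S) : Prop :=
  Subsingleton (extGroup S n A B)

/-- A module `E` is FP-injective if `Ext¹(F, E) = 0` for every finitely
presented module `F`. -/
def FPInjective (S : Type) [Ring S] (E : ModuleCat.{0} S) : Prop :=
  ∀ F : ModuleCat.{0} S, Module.FinitePresentation S F → extVanish S 1 F E

/-- `E` satisfies the Ext-criterion for FP-injective dimension `≤ n`:
`Ext^{n+1}(F, E) = 0` for every finitely presented `F`. -/
def fpInjDimLE (S : Type) [Ring S] (E : ModuleCat.{0} S) (n : ℕ) : Prop :=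
  ∀ F : ModuleCat.{0} S, Module.FinitePresentation S F → extVanish S (n + 1) F E

/-- `E` has FP-injective dimension exactly `n` : `n` is the least natural number
with `Ext^{n+1}(F, E) = 0` for all finitely presented `F`. -/
def fpInjDimEq (S : Type) [Ring S] (E : ModuleCat.{0} S) (n : ℕ) : Prop :=
  fpInjDimLE S E n ∧ ∀ m : ℕ, fpInjDimLE S E m → n ≤ m

/-- `E` has finite FP-injective dimension. -/
def fpInjDimFinite (S : Type) [Ring S] (E : ModuleCat.{0} S) : Prop :=
  ∃ n : ℕ, fpInjDimLE S E n

/-- A ring `S` is left coherent if every finitely generated left ideal is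
finitely presented (as a left `S`-module). -/
def LeftCoherent (S : Type) [Ring S] : Prop :=
  ∀ I : Submodule S S, I.FG → Module.FinitePresentation S I

/-- A ring `S` is right coherent if its opposite ring is left coherent. -/
def RightCoherent (S : Type) [Ring S] : Prop :=
  LeftCoherent Sᵐᵒᵖ

section BTensor

variable (R : Type) [Ring R]

/-- The subgroup of `A ⊗_ℤ B` by which one quotients to obtain the balanced
tensor product `A ⊗_R B` of a right `R`-module `A` and a left `R`-module `B`. -/
def btRel (A : Type) [AddCommGroup A] [Module Rᵐᵒᵖ A]
    (B : Type) [AddCommGroup B] [Module R B] :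
    Submodule ℤ (TensorProduct ℤ A B) :=
  Submodule.span ℤ
    {x | ∃ (a : A) (r : R) (b : B),
      x = (MulOpposite.op r • a) ⊗ₜ[ℤ] b - a ⊗ₜ[ℤ] (r • b)}

/-- The balanced tensor product `A ⊗_R B` of a right `R`-module `A` and a left
`R`-module `B`, defined as a quotient of `A ⊗_ℤ B`. -/
abbrev BTensor (A : Type) [AddCommGroup A] [Module Rᵐᵒᵖ A]
    (B : Type) [AddCommGroup B] [Module R B] : Type :=
  TensorProduct ℤ A B ⧸ btRel R A B

variable {A A' : Type} [AddCommGroup A] [Module Rᵐᵒᵖ A] [AddCommGroup A'] [Module Rᵐᵒᵖ A']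
variable {B B' : Type} [AddCommGroup B] [Module R B] [AddCommGroup B'] [Module R B']

/-- The map `A ⊗_R B → A ⊗_R B'` induced by a map `f : B → B'` of left
`R`-modules. -/
def BTensor.lmap (f : B →ₗ[R] B') (A : Type) [AddCommGroup A] [Module Rᵐᵒᵖ A] :
    BTensor R A B →ₗ[ℤ] BTensor R A B' :=
  Submodule.mapQ (btRel R A B) (btRel R A B')
    (TensorProduct.map LinearMap.id f.toAddMonoidHom.toIntLinearMap)
    (by
      rw [btRel, Submodule.span_le]
      rintro x ⟨a, r, b, rfl⟩
      simp only [SetLike.mem_coe, Submodule.mem_comap, map_sub, TensorProduct.map_tmul,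
        LinearMap.id_apply, AddMonoidHom.coe_toIntLinearMap, LinearMap.toAddMonoidHom_coe,
        map_smul]
      exact Submodule.subset_span ⟨a, r, f b, (by simp : (TensorProduct.map LinearMap.id f.toAddMonoidHom.toIntLinearMap)
        ((MulOpposite.op r • a) ⊗ₜ[ℤ] b - a ⊗ₜ[ℤ] (r • b)) =
        (MulOpposite.op r • a) ⊗ₜ[ℤ] f b - a ⊗ₜ[ℤ] (r • f b))⟩)

/-- The map `A ⊗_R B → A' ⊗_R B` induced by a map `g : A → A'` of right
`R`-modules. -/
def BTensor.rmap (g : A →ₗ[Rᵐᵒᵖ] A') (B : Type) [AddCommGroup B] [Module R B] :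
    BTensor R A B →ₗ[ℤ] BTensor R A' B :=
  Submodule.mapQ (btRel R A B) (btRel R A' B)
    (TensorProduct.map g.toAddMonoidHom.toIntLinearMap LinearMap.id)
    (by
      rw [btRel, Submodule.span_le]
      rintro x ⟨a, r, b, rfl⟩
      simp only [SetLike.mem_coe, Submodule.mem_comap, map_sub, TensorProduct.map_tmul,
        LinearMap.id_apply, AddMonoidHom.coe_toIntLinearMap, LinearMap.toAddMonoidHom_coe,
        map_smul]
      exact Submodule.subset_span ⟨g a, r, b, (by simp : (TensorProduct.map g.toAddMonoidHom.toIntLinearMap LinearMap.id)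
        ((MulOpposite.op r • a) ⊗ₜ[ℤ] b - a ⊗ₜ[ℤ] (r • b)) =
        (MulOpposite.op r • g a) ⊗ₜ[ℤ] b - g a ⊗ₜ[ℤ] (r • b))⟩)

/-- A right `R`-module `A` is flat if the functor `A ⊗_R —` preserves
injectivity of maps of left `R`-modules. -/
def FlatRight (A : ModuleCat.{0} Rᵐᵒᵖ) : Prop :=
  ∀ (B B' : ModuleCat.{0} R) (f : B →ₗ[R] B'),
    Function.Injective f → Function.Injective (BTensor.lmap R f A)

/-- A left `R`-module `B` is flat if the functor `— ⊗_R B` preserves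
injectivity of maps of right `R`-modules. -/
def FlatLeft (B : ModuleCat.{0} R) : Prop :=
  ∀ (A A' : ModuleCat.{0} Rᵐᵒᵖ) (g : A →ₗ[Rᵐᵒᵖ] A'),
    Function.Injective g → Function.Injective (BTensor.rmap R g B)

end BTensor

/-- A module `N` is Ding injective if there is a doubly infinite exact sequence
of injective modules, with `N` as one of the kernels, which stays exact after
applying `Hom(E, —)` for every FP-injective module `E`. -/
def DingInjective (S : Type) [Ring S] (N : ModuleCat.{0} S) : Prop :=
  ∃ (I : ℤ → ModuleCat.{0} S) (d : ∀ n : ℤ, I n →ₗ[S] I (n + 1)),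
    (∀ n, Module.Injective S (I n)) ∧
    (∀ n, Function.Exact (d n) (d (n + 1))) ∧
    Nonempty (N ≃ₗ[S] LinearMap.ker (d 0)) ∧
    (∀ E : ModuleCat.{0} S, FPInjective S E → ∀ n : ℤ,
      Function.Exact (fun g : E →ₗ[S] I n => (d n).comp g)
        (fun g : E →ₗ[S] I (n + 1) => (d (n + 1)).comp g))

/-- A right `R`-module `M` is Ding projective if there is a doubly infinite
exact sequence of projective right modules, with `M` as one of the kernels,
which stays exact after applying `Hom(—, F)` for every flat right module `F`. -/
def DingProjective (R : Type) [Ring R] (M : ModuleCat.{0} Rᵐᵒᵖ) : Prop :=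
  ∃ (P : ℤ → ModuleCat.{0} Rᵐᵒᵖ) (d : ∀ n : ℤ, P n →ₗ[Rᵐᵒᵖ] P (n + 1)),
    (∀ n, Module.Projective Rᵐᵒᵖ (P n)) ∧
    (∀ n, Function.Exact (d n) (d (n + 1))) ∧
    Nonempty (M ≃ₗ[Rᵐᵒᵖ] LinearMap.ker (d 0)) ∧
    (∀ F : ModuleCat.{0} Rᵐᵒᵖ, FlatRight R F → ∀ n : ℤ,
      Function.Exact (fun g : P (n + 1 + 1) →ₗ[Rᵐᵒᵖ] F => g.comp (d (n + 1)))
        (fun g : P (n + 1) →ₗ[Rᵐᵒᵖ] F => g.comp (d n)))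

/-- A right `R`-module `M` is Ding flat if there is a doubly infinite exact
sequence of flat right modules, with `M` as one of the kernels, which stays
exact after applying `— ⊗_R E` for every FP-injective left module `E`. -/
def DingFlat (R : Type) [Ring R] (M : ModuleCat.{0} Rᵐᵒᵖ) : Prop :=
  ∃ (F : ℤ → ModuleCat.{0} Rᵐᵒᵖ) (d : ∀ n : ℤ, F n →ₗ[Rᵐᵒᵖ] F (n + 1)),
    (∀ n, FlatRight R (F n)) ∧
    (∀ n, Function.Exact (d n) (d (n + 1))) ∧
    Nonempty (M ≃ₗ[Rᵐᵒᵖ] LinearMap.ker (d 0)) ∧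
    (∀ E : ModuleCat.{0} R, FPInjective R E → ∀ n : ℤ,
      Function.Exact (BTensor.rmap R (d n) E) (BTensor.rmap R (d (n + 1)) E))

/-- A left `R`-module `M` is Gorenstein flat if there is a doubly infinite
exact sequence of flat left modules, with `M` as one of the kernels, which
stays exact after applying `E ⊗_R —` for every injective right module `E`. -/
def GorensteinFlat (R : Type) [Ring R] (M : ModuleCat.{0} R) : Prop :=
  ∃ (F : ℤ → ModuleCat.{0} R) (d : ∀ n : ℤ, F n →ₗ[R] F (n + 1)),
    (∀ n, FlatLeft R (F n)) ∧
    (∀ n, Function.Exact (d n) (d (n + 1))) ∧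
    Nonempty (M ≃ₗ[R] LinearMap.ker (d 0)) ∧
    (∀ E : ModuleCat.{0} Rᵐᵒᵖ, Module.Injective Rᵐᵒᵖ E → ∀ n : ℤ,
      Function.Exact (BTensor.lmap R (d n) E) (BTensor.lmap R (d (n + 1)) E))

/-- A right `R`-module `M` has flat dimension `≤ n` : there is an exact
resolution `0 → F_n → ⋯ → F_0 → M → 0` by flat right modules (encoded as an
`ℕ`-indexed resolution which vanishes beyond degree `n`). -/
def flatDimLE (R : Type) [Ring R] (M : ModuleCat.{0} Rᵐᵒᵖ) (n : ℕ) : Prop :=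
  ∃ (F : ℕ → ModuleCat.{0} Rᵐᵒᵖ) (d : ∀ k : ℕ, F (k + 1) →ₗ[Rᵐᵒᵖ] F k)
    (ε : F 0 →ₗ[Rᵐᵒᵖ] M),
    (∀ k, FlatRight R (F k)) ∧
    Function.Surjective ε ∧
    Function.Exact (d 0) ε ∧
    (∀ k, Function.Exact (d (k + 1)) (d k)) ∧
    (∀ k, n < k → Subsingleton (F k))

/-- A right `R`-module has finite flat dimension. -/
def flatDimFinite (R : Type) [Ring R] (M : ModuleCat.{0} Rᵐᵒᵖ) : Prop :=
  ∃ n : ℕ, flatDimLE R M n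

/-- A ring `R` is an `n`-FC ring if it is left and right coherent and has left
and right self FP-injective dimension equal to `n`. -/
def IsFCRing (R : Type) [Ring R] (n : ℕ) : Prop :=
  LeftCoherent R ∧ RightCoherent R ∧
    fpInjDimEq R (ModuleCat.of R R) n ∧
    fpInjDimEq Rᵐᵒᵖ (ModuleCat.of Rᵐᵒᵖ Rᵐᵒᵖ) n

/-- A ring is Ding-Chen if it is an `n`-FC ring for some `n`. -/
def IsDingChen (R : Type) [Ring R] : Prop :=
  ∃ n : ℕ, IsFCRing R n

end

/-! By Lazard's theorem, which follows from the equational criterion for flatness, a flat module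
`M` is the filtered colimit of the finite free modules over it, so the hypothesis makes `M` Ding
projective. A flat Ding projective module is projective: exactness of `Hom(—, M)` on its complete
resolution `P` retracts the inclusion `M ≅ ker (P⁰ → P¹) ⊆ P⁰`, so `M` is a summand of `P⁰`. -/

open Limits

namespace BTensor

variable (R : Type) [Ring R] {A : Type} [AddCommGroup A] [Module Rᵐᵒᵖ A]
  {B : Type} [AddCommGroup B] [Module R B] {C : Type} [AddCommGroup C] [Module R C]

abbrev tmul (a : A) (b : B) : BTensor R A B := Submodule.Quotient.mk (a ⊗ₜ[ℤ] b)

theorem tmul_add (a : A) (b b' : B) : tmul R a (b + b') = tmul R a b + tmul R a b' := by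
  simp only [tmul, TensorProduct.tmul_add, Submodule.Quotient.mk_add]

theorem add_tmul (a a' : A) (b : B) : tmul R (a + a') b = tmul R a b + tmul R a' b := by
  simp only [tmul, TensorProduct.add_tmul, Submodule.Quotient.mk_add]

theorem zero_tmul (b : B) : tmul R (0 : A) b = 0 := by
  simp only [tmul, TensorProduct.zero_tmul, Submodule.Quotient.mk_zero]

theorem sum_tmul {ι : Type} (s : Finset ι) (a : ι → A) (b : B) :
    tmul R (∑ i ∈ s, a i) b = ∑ i ∈ s, tmul R (a i) b := by
  rw [tmul, TensorProduct.sum_tmul, ← Submodule.mkQ_apply, map_sum]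
  rfl

theorem tmul_sub (a : A) (b b' : B) : tmul R a (b - b') = tmul R a b - tmul R a b' := by
  simp only [tmul, TensorProduct.tmul_sub, Submodule.Quotient.mk_sub]

theorem op_smul_tmul (a : A) (r : R) (b : B) :
    tmul R (MulOpposite.op r • a) b = tmul R a (r • b) := by
  rw [← sub_eq_zero, ← Submodule.Quotient.mk_sub, Submodule.Quotient.mk_eq_zero]
  exact Submodule.subset_span ⟨a, r, b, rfl⟩

theorem lmap_tmul (f : B →ₗ[R] C) (a : A) (b : B) :
    lmap R f A (tmul R a b) = tmul R a (f b) :=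
  rfl

theorem exists_eq_sum_tmul (w : BTensor R A B) :
    ∃ (k : ℕ) (a : Fin k → A) (b : Fin k → B), w = ∑ j, tmul R (a j) (b j) := by
  obtain ⟨t, rfl⟩ := Submodule.Quotient.mk_surjective _ w
  obtain ⟨k, a, b, rfl⟩ := TensorProduct.exists_sum_tmul_eq t
  exact ⟨k, a, b, map_sum (btRel R A B).mkQ _ _⟩

theorem linearMap_ext {N : Type} [AddCommGroup N] {g g' : BTensor R A B →ₗ[ℤ] N}
    (h : ∀ a b, g (tmul R a b) = g' (tmul R a b)) : g = g' :=
  Submodule.linearMap_qext _ (TensorProduct.ext' h)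

def lift {N : Type} [AddCommGroup N] (φ : A →+ B →+ N)
    (hφ : ∀ a (r : R) b, φ (MulOpposite.op r • a) b = φ a (r • b)) :
    BTensor R A B →ₗ[ℤ] N :=
  (btRel R A B).liftQ (TensorProduct.liftAddHom φ fun z a b => by simp).toIntLinearMap <| by
    rw [btRel, Submodule.span_le]
    rintro _ ⟨a, r, b, rfl⟩
    simp [hφ]

def rid : BTensor R A R →ₗ[ℤ] A :=
  lift R (AddMonoidHom.mk' (fun a => AddMonoidHom.mk' (fun r => MulOpposite.op r • a)
      fun r r' => by simp [add_smul]) fun a a' => by ext; simp)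
    fun a r b => by simp [smul_smul]

@[simp]
theorem rid_tmul (a : A) (r : R) : rid R (tmul R a r) = MulOpposite.op r • a :=
  rfl

theorem ker_lmap_le_range_lmap_ker_subtype (π : B →ₗ[R] C) (hπ : Function.Surjective π)
    (A : Type) [AddCommGroup A] [Module Rᵐᵒᵖ A] :
    LinearMap.ker (lmap R π A) ≤ LinearMap.range (lmap R (LinearMap.ker π).subtype A) := by
  set Q := LinearMap.range (lmap R (LinearMap.ker π).subtype A)
  have hdiff : ∀ (a : A) b b', π b = π b' → Q.mkQ (tmul R a b) = Q.mkQ (tmul R a b') := by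
    intro a b b' h
    rw [← sub_eq_zero, ← map_sub, ← tmul_sub, Submodule.mkQ_apply, Submodule.Quotient.mk_eq_zero]
    exact ⟨tmul R a ⟨b - b', by simp [h]⟩, rfl⟩
  have hσ := Function.surjInv_eq hπ
  -- `A ⊗ C → (A ⊗ B) / Q`, well defined on `a ⊗ c` by choosing any preimage of `c`
  let φ : A →+ C →+ BTensor R A B ⧸ Q :=
    AddMonoidHom.mk' (fun a => AddMonoidHom.mk' (fun c => Q.mkQ (tmul R a (Function.surjInv hπ c)))
      fun c c' => by rw [← map_add, ← tmul_add]; exact hdiff _ _ _ (by simp [hσ]))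
      fun a a' => by ext c; simp [add_tmul]
  let s := lift R φ fun a r c => by
    simp only [φ, AddMonoidHom.mk'_apply, op_smul_tmul]
    exact hdiff _ _ _ (by simp [hσ])
  have hs : s ∘ₗ lmap R π A = Q.mkQ := linearMap_ext R fun a b => hdiff _ _ _ (hσ _)
  intro w hw
  rw [← Submodule.Quotient.mk_eq_zero, ← Submodule.mkQ_apply, ← hs, LinearMap.comp_apply,
    LinearMap.mem_ker.mp hw, map_zero]

end BTensor

section FinFree

variable (R : Type) [Ring R]

noncomputable def finFreeBasis (n : ℕ) : Module.Basis (Fin n) Rᵐᵒᵖ (Fin n → R) :=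
  Module.Basis.ofEquivFun (LinearEquiv.piCongrRight fun _ => MulOpposite.opLinearEquiv Rᵐᵒᵖ)

@[simp]
theorem finFreeBasis_repr_apply (n : ℕ) (g : Fin n → R) (i : Fin n) :
    (finFreeBasis R n).repr g i = MulOpposite.op (g i) := by
  simp [finFreeBasis]

instance (n : ℕ) : Module.Projective Rᵐᵒᵖ (Fin n → R) :=
  .of_basis (finFreeBasis R n)

end FinFree

namespace FlatRight

open BTensor

variable {R : Type} [Ring R] {M : ModuleCat.{0} Rᵐᵒᵖ}

/-- Equational criterion: over a flat module every relation is trivial. -/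
theorem exists_factorization_of_sum_smul_eq_zero (hM : FlatRight R M) {n : ℕ} (f : Fin n → R)
    (x : Fin n → M) (hx : ∑ i, MulOpposite.op (f i) • x i = 0) :
    ∃ (m : ℕ) (y : Fin m → M) (a : Fin m → Fin n → R),
      (∀ i, x i = ∑ t, MulOpposite.op (a t i) • y t) ∧ ∀ t, ∑ i, a t i * f i = 0 := by
  classical
  let c := Fintype.linearCombination R f
  let π := c.rangeRestrict
  let xt : BTensor R M (Fin n → R) := ∑ i, tmul R (x i) (Pi.single i 1)
  have hxt : ∀ i, rid R (lmap R (LinearMap.proj i) M xt) = x i := by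
    intro i
    simp [xt, map_sum, lmap_tmul, Pi.single_apply, apply_ite MulOpposite.op, ite_smul]
  have hcxt : lmap R (LinearMap.range c).subtype M (lmap R π M xt) = 0 := by
    have hterm : ∀ i, lmap R (LinearMap.range c).subtype M (lmap R π M (tmul R (x i) (Pi.single i 1)))
        = tmul R (MulOpposite.op (f i) • x i) 1 := by
      intro i
      rw [op_smul_tmul, smul_eq_mul, mul_one]
      simp [π, c, lmap_tmul]
    simp only [xt, map_sum, hterm, ← sum_tmul, hx, zero_tmul]
  have hπxt : lmap R π M xt = 0 :=
    hM (ModuleCat.of R (LinearMap.range c)) (ModuleCat.of R R) (LinearMap.range c).subtype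
      Subtype.val_injective (by rw [hcxt, map_zero])
  obtain ⟨w, hw⟩ := ker_lmap_le_range_lmap_ker_subtype R π c.surjective_rangeRestrict M hπxt
  obtain ⟨m, y, k, rfl⟩ := exists_eq_sum_tmul R w
  refine ⟨m, y, fun t => k t, fun i => ?_, fun t => ?_⟩
  · rw [← hxt i, ← hw]
    simp [map_sum, lmap_tmul]
  · have hk : c (k t) = 0 := congrArg Subtype.val (k t).2
    simpa [c, Fintype.linearCombination_apply] using hk

theorem exists_factorization_of_apply_eq_zero (hM : FlatRight R M) {n : ℕ}
    (v : (Fin n → R) →ₗ[Rᵐᵒᵖ] M) (k : Fin n → R) (hk : v k = 0) :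
    ∃ (m : ℕ) (a : (Fin n → R) →ₗ[Rᵐᵒᵖ] (Fin m → R)) (y : (Fin m → R) →ₗ[Rᵐᵒᵖ] M),
      y ∘ₗ a = v ∧ a k = 0 := by
  let b := finFreeBasis R n
  have hx : ∑ i, MulOpposite.op (k i) • v (b i) = 0 := by
    conv_rhs => rw [← hk, ← b.sum_repr k]
    simp only [map_sum, map_smul, b, finFreeBasis_repr_apply]
  obtain ⟨m, y, a, hxy, hak⟩ := hM.exists_factorization_of_sum_smul_eq_zero k _ hx
  refine ⟨m, b.constr ℕ fun i t => a t i, (finFreeBasis R m).constr ℕ y, b.ext fun i => ?_, ?_⟩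
  · rw [LinearMap.comp_apply, Module.Basis.constr_basis, hxy i, Module.Basis.constr_apply_fintype]
    simp
  · ext t
    simpa [b, Module.Basis.constr_apply_fintype, Finset.sum_apply, MulOpposite.smul_eq_mul_unop]
      using hak t

theorem exists_factorization_of_forall_mem_apply_eq_zero (hM : FlatRight R M) {n : ℕ}
    (v : (Fin n → R) →ₗ[Rᵐᵒᵖ] M) (s : Finset (Fin n → R)) (hs : ∀ k ∈ s, v k = 0) :
    ∃ (m : ℕ) (a : (Fin n → R) →ₗ[Rᵐᵒᵖ] (Fin m → R)) (y : (Fin m → R) →ₗ[Rᵐᵒᵖ] M),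
      y ∘ₗ a = v ∧ ∀ k ∈ s, a k = 0 := by
  classical
  induction s using Finset.induction_on with
  | empty => exact ⟨n, LinearMap.id, v, rfl, by simp⟩
  | insert k s _ ih =>
    obtain ⟨m₁, a₁, y₁, hv₁, hs₁⟩ := ih fun k' hk' => hs k' (Finset.mem_insert_of_mem hk')
    have hk : y₁ (a₁ k) = 0 := by
      rw [← LinearMap.comp_apply, hv₁, hs k (Finset.mem_insert_self k s)]
    obtain ⟨m₂, a₂, y₂, hv₂, hk₂⟩ := hM.exists_factorization_of_apply_eq_zero y₁ (a₁ k) hk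
    refine ⟨m₂, a₂ ∘ₗ a₁, y₂, by rw [← LinearMap.comp_assoc, hv₂, hv₁], ?_⟩
    simp only [Finset.forall_mem_insert, LinearMap.comp_apply, hk₂, true_and]
    exact fun k' hk' => by rw [hs₁ k' hk', map_zero]

end FlatRight

section Lazard

variable (R : Type) [Ring R] (M : ModuleCat.{0} Rᵐᵒᵖ)

/-- The index category of Lazard's theorem. -/
structure FinFreeOver where
  rank : ℕ
  map : (Fin rank → R) →ₗ[Rᵐᵒᵖ] M

namespace FinFreeOver

instance : SmallCategory (FinFreeOver R M) where
  Hom X Y := {a : (Fin X.rank → R) →ₗ[Rᵐᵒᵖ] (Fin Y.rank → R) // Y.map ∘ₗ a = X.map}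
  id X := ⟨LinearMap.id, LinearMap.comp_id _⟩
  comp f g := ⟨g.1 ∘ₗ f.1, by rw [← LinearMap.comp_assoc, g.2, f.2]⟩

def diagram : FinFreeOver R M ⥤ ModuleCat.{0} Rᵐᵒᵖ where
  obj X := ModuleCat.of Rᵐᵒᵖ (Fin X.rank → R)
  map f := ModuleCat.ofHom f.1

def cocone : Cocone (diagram R M) where
  pt := M
  ι := { app X := ModuleCat.ofHom X.map
         naturality _ _ f := ModuleCat.hom_ext f.2 }

variable {R M}

def finAddEquivProd (p q : ℕ) : (Fin (p + q) → R) ≃ₗ[Rᵐᵒᵖ] (Fin p → R) × (Fin q → R) :=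
  (LinearEquiv.funCongrLeft Rᵐᵒᵖ R finSumFinEquiv).trans
    (LinearEquiv.sumArrowLequivProdArrow _ _ Rᵐᵒᵖ R)

theorem isFiltered (hM : FlatRight R M) : IsFiltered (FinFreeOver R M) where
  nonempty := ⟨⟨0, 0⟩⟩
  cocone_objs X Y := by
    let e := finAddEquivProd (R := R) X.rank Y.rank
    let Z : FinFreeOver R M := ⟨_, X.map.coprod Y.map ∘ₗ e.toLinearMap⟩
    refine ⟨Z, ⟨e.symm.toLinearMap ∘ₗ LinearMap.inl _ _ _, ?_⟩,
      ⟨e.symm.toLinearMap ∘ₗ LinearMap.inr _ _ _, ?_⟩, trivial⟩ <;>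
    ext <;> simp [Z]
  cocone_maps X Y f g := by
    classical
    let b := finFreeBasis R X.rank
    obtain ⟨m, a, y, hya, ha⟩ := hM.exists_factorization_of_forall_mem_apply_eq_zero Y.map
      (Finset.univ.image fun i => f.1 (b i) - g.1 (b i)) (by
        simp only [Finset.mem_image, Finset.mem_univ, true_and, forall_exists_index,
          forall_apply_eq_imp_iff, map_sub]
        intro i
        rw [← LinearMap.comp_apply, ← LinearMap.comp_apply, f.2, g.2, sub_self])
    refine ⟨⟨m, y⟩, ⟨a, hya⟩, Subtype.ext (b.ext fun i => ?_)⟩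
    have := ha _ (Finset.mem_image_of_mem _ (Finset.mem_univ i))
    rwa [map_sub, sub_eq_zero] at this

/-- Lazard's theorem. -/
noncomputable def isColimitCocone (hM : FlatRight R M) : IsColimit (cocone R M) :=
  letI := isFiltered hM
  isColimitOfReflects (forget _) <| Types.FilteredColimit.isColimitOf' _ _
    (fun (x : M) => ⟨⟨1, (finFreeBasis R 1).constr ℕ fun _ => x⟩, finFreeBasis R 1 0, by
      change x = (finFreeBasis R 1).constr ℕ (fun _ => x) (finFreeBasis R 1 0)
      rw [Module.Basis.constr_basis]⟩)
    (fun X (g g' : Fin X.rank → R) (h : X.map g = X.map g') => by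
      classical
      obtain ⟨m, a, y, hya, ha⟩ :=
        hM.exists_factorization_of_forall_mem_apply_eq_zero X.map {g - g'} (by simpa [sub_eq_zero])
      refine ⟨⟨m, y⟩, ⟨a, hya⟩, ?_⟩
      change a g = a g'
      simpa [sub_eq_zero] using ha _ (Finset.mem_singleton_self _))

end FinFreeOver

end Lazard

section Contractible

variable {S : Type} [Ring S] {N : Type} [AddCommGroup N] [Module S N] {d s : N →ₗ[S] N}

theorem exact_of_homotopy (hdd : d ∘ₗ d = 0) (hs : s ∘ₗ d + d ∘ₗ s = LinearMap.id) :
    Function.Exact d d := by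
  intro y
  refine ⟨fun hy => ⟨s y, ?_⟩, fun ⟨x, hx⟩ => hx ▸ LinearMap.congr_fun hdd x⟩
  simpa [hy] using LinearMap.congr_fun hs y

theorem exact_precomp_of_homotopy (hdd : d ∘ₗ d = 0) (hs : s ∘ₗ d + d ∘ₗ s = LinearMap.id)
    (F : Type) [AddCommGroup F] [Module S F] :
    Function.Exact (fun g : N →ₗ[S] F => g ∘ₗ d) (fun g : N →ₗ[S] F => g ∘ₗ d) := by
  intro g
  refine ⟨fun hg => ⟨g ∘ₗ s, ?_⟩, fun ⟨h, hh⟩ => by simp only [← hh, LinearMap.comp_assoc, hdd,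
    LinearMap.comp_zero]⟩
  refine LinearMap.ext fun x => ?_
  have hx := congrArg g (LinearMap.congr_fun hs x)
  have hgd : g (d (s x)) = 0 := LinearMap.congr_fun hg (s x)
  simpa [hgd] using hx

end Contractible

/-- By exactness of `Hom(—, M)`, the corestriction `P₁ → ker d₀ ≅ M` of `d₁` factors through `d₁`;
the factor `P₀ → M` retracts the inclusion `M ≅ ker d₀ ⊆ P₀`. -/
theorem projective_of_equiv_ker_of_exact_precomp {S : Type} [Ring S]
    {P₂ P₁ P₀ Q M : Type} [AddCommGroup P₂] [AddCommGroup P₁] [AddCommGroup P₀] [AddCommGroup Q]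
    [AddCommGroup M] [Module S P₂] [Module S P₁] [Module S P₀] [Module S Q] [Module S M]
    [Module.Projective S P₀] {d₂ : P₂ →ₗ[S] P₁} {d₁ : P₁ →ₗ[S] P₀} {d₀ : P₀ →ₗ[S] Q}
    (h₂ : Function.Exact d₂ d₁) (h₁ : Function.Exact d₁ d₀)
    (hM : Function.Exact (fun g : P₀ →ₗ[S] M => g ∘ₗ d₁) (fun g : P₁ →ₗ[S] M => g ∘ₗ d₂))
    (e : M ≃ₗ[S] LinearMap.ker d₀) : Module.Projective S M := by
  let p : P₁ →ₗ[S] LinearMap.ker d₀ := d₁.codRestrict _ fun x => h₁.apply_apply_eq_zero x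
  have hp : Function.Surjective p := fun z => by
    obtain ⟨x, hx⟩ := (h₁ z).mp z.2
    exact ⟨x, Subtype.ext hx⟩
  obtain ⟨r, hr⟩ := (hM (e.symm.toLinearMap ∘ₗ p)).mp <| by
    ext x
    have hx : p (d₂ x) = 0 := Subtype.ext (h₂.apply_apply_eq_zero x)
    simp [hx]
  refine Module.Projective.of_split ((LinearMap.ker d₀).subtype ∘ₗ e.toLinearMap) r
    (LinearMap.ext fun m => ?_)
  obtain ⟨x, hx⟩ := hp (e m)
  calc r (e m : P₀) = (r ∘ₗ d₁) x := by rw [← hx]; rfl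
    _ = m := by rw [show r ∘ₗ d₁ = _ from hr]; simp [hx]

section DingProjective

variable {R : Type} [Ring R]

theorem dingProjective_of_projective (M : ModuleCat.{0} Rᵐᵒᵖ) [Module.Projective Rᵐᵒᵖ M] :
    DingProjective R M := by
  let d := LinearMap.inr Rᵐᵒᵖ M M ∘ₗ LinearMap.fst Rᵐᵒᵖ M M
  let s := LinearMap.inl Rᵐᵒᵖ M M ∘ₗ LinearMap.snd Rᵐᵒᵖ M M
  have hdd : d ∘ₗ d = 0 := by ext <;> simp [d]
  have hs : s ∘ₗ d + d ∘ₗ s = LinearMap.id := by ext <;> simp [d, s]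
  have hker : LinearMap.range (LinearMap.inr Rᵐᵒᵖ M M) = LinearMap.ker d := by
    rw [LinearMap.ker_comp_of_ker_eq_bot _ (LinearMap.ker_eq_bot.mpr LinearMap.inr_injective),
      LinearMap.ker_fst]
  exact ⟨fun _ => ModuleCat.of Rᵐᵒᵖ (M × M), fun _ => d, fun _ => inferInstance,
    fun _ => exact_of_homotopy hdd hs,
    ⟨(LinearEquiv.ofInjective _ LinearMap.inr_injective).trans (LinearEquiv.ofEq _ _ hker)⟩,
    fun F _ _ => exact_precomp_of_homotopy hdd hs F⟩

theorem DingProjective.of_linearEquiv {M N : ModuleCat.{0} Rᵐᵒᵖ} (e : M ≃ₗ[Rᵐᵒᵖ] N)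
    (h : DingProjective R N) : DingProjective R M :=
  let ⟨P, d, hP, hd, ⟨q⟩, hhom⟩ := h
  ⟨P, d, hP, hd, ⟨e.trans q⟩, hhom⟩

theorem DingProjective.projective_of_flatRight {M : ModuleCat.{0} Rᵐᵒᵖ}
    (hdp : DingProjective R M) (hfl : FlatRight R M) : Module.Projective Rᵐᵒᵖ M := by
  obtain ⟨P, d, hP, hd, ⟨e⟩, hhom⟩ := hdp
  -- align the index of `ker (d 0)` with the indices `hd` and `hhom` produce
  rw [show (0 : ℤ) = -2 + 1 + 1 by norm_num] at e
  exact projective_of_equiv_ker_of_exact_precomp (hd (-2)) (hd (-2 + 1)) (hhom M hfl (-2)) e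

end DingProjective

/-- If the Ding projective right `R`-modules are closed under
filtered colimits, then `R` is right perfect, i.e. every flat right `R`-module
is projective. -/
theorem statement7 (R : Type) [Ring R]
    (h : ∀ (J : Type) [SmallCategory J] [IsFiltered J] (F : J ⥤ ModuleCat.{0} Rᵐᵒᵖ),
      (∀ j, DingProjective R (F.obj j)) →
      DingProjective R (Limits.colimit F)) :
    ∀ M : ModuleCat.{0} Rᵐᵒᵖ, FlatRight R M → Module.Projective Rᵐᵒᵖ M := by
  intro M hM
  have := FinFreeOver.isFiltered hM
  have hcolim : DingProjective R (colimit (FinFreeOver.diagram R M)) :=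
    h _ _ fun X => dingProjective_of_projective (ModuleCat.of Rᵐᵒᵖ (Fin X.rank → R))
  let e := ((colimit.isColimit _).coconePointUniqueUpToIso
    (FinFreeOver.isColimitCocone hM)).toLinearEquiv
  exact (hcolim.of_linearEquiv e.symm).projective_of_flatRight hM
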